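/- Let f_N ⇀ f_∞ weakly in L²(Y;ℂ). Then for every fixed ξ' ∈ ℤ^d, the ξ'-th coefficient of the DFT of the cell averages of f_N converges to the ξ'-th Fourier coefficient of f_∞; i.e. with f_N*[I] = ⨍_{Y_I} f_N and f̂_N*[ξ'] = N^{−d} Σ_I f_N*[I] e^{−2πi I·ξ'/N}, one has f̂_N*[ξ'] → f̂_∞[ξ'] as N → ∞. -/

import Mathlib

open Real MeasureTheory Filter Finset

noncomputable section

/-- The open unit cube `Y = (0,1)^d`. -/
def cube (d : ℕ) : Set (Fin d → ℝ) := {x | ∀ m, x m ∈ Set.Ioo (0 : ℝ) 1}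

/-- The subcube `Y_I` of side `1/N` indexed by `I ∈ {0,…,N-1}^d`. -/
def cell (d N : ℕ) (I : Fin d → Fin N) : Set (Fin d → ℝ) :=
  {x | ∀ m, (I m : ℝ) / N ≤ x m ∧ x m < ((I m : ℝ) + 1) / N}

/-- The cell average `f*[I] = ⨍_{Y_I} f`. -/
def cellAvg (d N : ℕ) (f : (Fin d → ℝ) → ℂ) (I : Fin d → Fin N) : ℂ :=
  (N : ℂ) ^ d * ∫ x in cell d N I, f x

/-- Identification of `j ∈ {0,…,N-1}` with a frequency in `[-N/2, N/2)`. -/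
def freq (N : ℕ) (j : Fin N) : ℤ := if 2 * (j : ℕ) < N then (j : ℤ) else (j : ℤ) - N

/-- `e(z) = exp(2πi z)`. -/
def ee (z : ℂ) : ℂ := Complex.exp (2 * π * Complex.I * z)

/-- The DFT of the cell averages of `f`:
`f̂*[ξ] = N^{-d} Σ_I f*[I] e^{-2πi I·ξ/N}`. -/
def dftAvg (d N : ℕ) (f : (Fin d → ℝ) → ℂ) (ξ : Fin d → ℤ) : ℂ :=
  ((N : ℂ) ^ d)⁻¹ * ∑ I : Fin d → Fin N, cellAvg d N f I *
    ee (-(∑ m, (I m : ℂ) * (ξ m : ℂ)) / N)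

/-- The box-filter Fourier symbol `Ĝ_N[ξ] = ∏_m N sin(πξ_m/N)/(πξ_m)`. -/
def Ghat (d N : ℕ) (ξ : Fin d → ℤ) : ℝ :=
  ∏ m, if ξ m = 0 then 1 else (N : ℝ) * Real.sin (π * ξ m / N) / (π * ξ m)

/-- The `ξ`-th Fourier coefficient `f̂[ξ] = ∫_Y f(x) e^{-2πi ξ·x} dx`. -/
def fCoeff (d : ℕ) (f : (Fin d → ℝ) → ℂ) (ξ : Fin d → ℤ) : ℂ :=
  ∫ x in cube d, f x * ee (-(∑ m, (ξ m : ℂ) * (x m : ℂ)))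

/-- The quasi-interpolation operator
`Q_N f = Σ_{ξ∈F_N} Ĝ_N[ξ]⁻¹ e^{-πi ξ·1/N} f̂*[ξ] e^{2πi ξ·x}`. -/
def QN (d N : ℕ) (f : (Fin d → ℝ) → ℂ) (x : Fin d → ℝ) : ℂ :=
  ∑ j : Fin d → Fin N,
    ((Ghat d N (fun m => freq N (j m)) : ℂ)⁻¹ *
      Complex.exp (-(π * Complex.I) * (∑ m, (freq N (j m) : ℂ)) / N)) *
      dftAvg d N f (fun m => freq N (j m)) *
      ee (∑ m, (freq N (j m) : ℂ) * (x m : ℂ))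

/-- The `L²`-orthogonal projection onto the span of the exponentials with
frequencies in `F_N` (Fourier truncation). -/
def PN (d N : ℕ) (f : (Fin d → ℝ) → ℂ) (x : Fin d → ℝ) : ℂ :=
  ∑ j : Fin d → Fin N,
    fCoeff d f (fun m => freq N (j m)) * ee (∑ m, (freq N (j m) : ℂ) * (x m : ℂ))

/-- Weak convergence in `L²(Y;ℂ)` of a sequence `g_N` to `g_∞`,
formulated by testing against every `L²` function. -/
def WeakL2 (d : ℕ) (g : ℕ → (Fin d → ℝ) → ℂ) (glim : (Fin d → ℝ) → ℂ) : Prop :=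
  ∀ v : (Fin d → ℝ) → ℂ, MemLp v 2 (volume.restrict (cube d)) →
    Tendsto (fun N => ∫ x in cube d, g N x * (starRingEnd ℂ) (v x)) atTop
      (nhds (∫ x in cube d, glim x * (starRingEnd ℂ) (v x)))

/-! On a cell `Y_I` the DFT phase `e(-I·ξ'/N)` is within `2π‖ξ'‖₁/N` of `e(-ξ'·x)`, so the
DFT of the cell averages of `F` differs from the Fourier coefficient of `F` by at most
`2π‖ξ'‖₁/N · ‖F‖_{L¹(Y)}`. A weakly convergent sequence is bounded in `L²(Y)` (uniform
boundedness), hence in `L¹(Y)`, so this error tends to zero, while the Fourier coefficients of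
`f_N` converge to those of `f_∞` by testing the weak convergence against the characters. -/

lemma norm_ee (z : ℂ) : ‖ee z‖ = Real.exp (-(2 * π * z.im)) := by
  simp [ee, Complex.norm_exp, Complex.mul_re]

@[fun_prop]
lemma continuous_ee : Continuous ee := by unfold ee; fun_prop

lemma norm_ee_ofReal_sub_le (s t : ℝ) : ‖ee s - ee t‖ ≤ 2 * π * |s - t| := by
  have h (u : ℝ) : ee u = circleMap 0 1 (2 * π * u) := by
    simp only [ee, circleMap, zero_add]; push_cast; ring_nf
  rw [h, h, ← dist_eq_norm]
  refine ((lipschitzWith_circleMap 0 1).dist_le_mul _ _).trans_eq ?_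
  rw [Real.dist_eq, ← mul_sub, abs_mul, abs_of_pos Real.two_pi_pos]
  simp

lemma continuous_ee_neg_sum {d : ℕ} (ξ : Fin d → ℤ) :
    Continuous fun x : Fin d → ℝ => ee (-(∑ m, (ξ m : ℂ) * (x m : ℂ))) := by
  fun_prop

lemma norm_ee_neg_sum {d : ℕ} (ξ : Fin d → ℤ) (x : Fin d → ℝ) :
    ‖ee (-(∑ m, (ξ m : ℂ) * (x m : ℂ)))‖ = 1 := by
  simp [norm_ee]

lemma natFloor_mul_eq_of_mem_Ico {N k : ℕ} (hN : 0 < N) {x : ℝ}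
    (hx : x ∈ Set.Ico ((k : ℝ) / N) ((k + 1) / N)) : ⌊(N : ℝ) * x⌋₊ = k := by
  have hN' : (0 : ℝ) < N := by exact_mod_cast hN
  rw [Set.mem_Ico, div_le_iff₀ hN', lt_div_iff₀ hN'] at hx
  rw [Nat.floor_eq_iff (by nlinarith [hx.1, k.cast_nonneg (α := ℝ)])]
  constructor <;> linarith

lemma iUnion_Ico_div_natCast {N : ℕ} (hN : 0 < N) :
    ⋃ k : Fin N, Set.Ico ((k : ℝ) / N) ((k + 1) / N) = Set.Ico 0 1 := by
  have hN' : (0 : ℝ) < N := by exact_mod_cast hN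
  ext x
  simp only [Set.mem_iUnion, Set.mem_Ico]
  constructor
  · rintro ⟨k, hk₀, hk₁⟩
    refine ⟨le_trans (by positivity) hk₀, hk₁.trans_le ?_⟩
    rw [div_le_one hN']
    exact_mod_cast k.isLt
  · rintro ⟨hx₀, hx₁⟩
    have hNx : 0 ≤ (N : ℝ) * x := by positivity
    refine ⟨⟨⌊(N : ℝ) * x⌋₊, (Nat.floor_lt hNx).2 (by nlinarith)⟩, ?_, ?_⟩
    · rw [div_le_iff₀ hN']; linarith [Nat.floor_le hNx]
    · rw [lt_div_iff₀ hN']; linarith [Nat.lt_floor_add_one ((N : ℝ) * x)]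

lemma cell_eq_pi (d N : ℕ) (I : Fin d → Fin N) :
    cell d N I = Set.univ.pi fun m => Set.Ico ((I m : ℝ) / N) ((I m + 1) / N) := by
  ext x; simp [cell, Set.mem_pi]

lemma cube_eq_pi (d : ℕ) : cube d = Set.univ.pi fun _ => Set.Ioo 0 1 := by
  ext x; simp [cube, Set.mem_pi]

lemma measurableSet_cell (d N : ℕ) (I : Fin d → Fin N) : MeasurableSet (cell d N I) := by
  rw [cell_eq_pi]; exact .univ_pi fun _ => measurableSet_Ico

open Function in
lemma pairwise_disjoint_cell (d N : ℕ) : Pairwise (Disjoint on cell d N) := by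
  intro I J hIJ
  obtain ⟨m, hm⟩ := Function.ne_iff.1 hIJ
  rw [onFun, cell_eq_pi, cell_eq_pi, Set.disjoint_univ_pi]
  refine ⟨m, Set.disjoint_left.2 fun x hI hJ => hm (Fin.ext ?_)⟩
  have hN : 0 < N := (I m).pos
  rw [← natFloor_mul_eq_of_mem_Ico hN hI, ← natFloor_mul_eq_of_mem_Ico hN hJ]

lemma cube_ae_eq_iUnion_cell (d : ℕ) {N : ℕ} (hN : 0 < N) :
    cube d =ᵐ[volume] ⋃ I, cell d N I := by
  have h := Set.iUnion_univ_pi fun (_ : Fin d) (k : Fin N) => Set.Ico ((k : ℝ) / N) ((k + 1) / N)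
  simp only [iUnion_Ico_div_natCast hN] at h
  simp only [cell_eq_pi, h, cube_eq_pi, volume_pi]
  exact Measure.ae_eq_set_pi fun _ _ => Ioo_ae_eq_Ico

lemma integral_cube_eq_sum_integral_cell {d N : ℕ} (hN : 0 < N) {E : Type*}
    [NormedAddCommGroup E] [NormedSpace ℝ E] {G : (Fin d → ℝ) → E} (hG : IntegrableOn G (cube d)) :
    ∫ x in cube d, G x = ∑ I, ∫ x in cell d N I, G x := by
  have h := cube_ae_eq_iUnion_cell d hN
  rw [setIntegral_congr_set h, integral_iUnion (measurableSet_cell d N) (pairwise_disjoint_cell d N)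
    (hG.congr_set_ae h.symm), tsum_fintype]

lemma MeasureTheory.IntegrableOn.mono_cell {d N : ℕ} (hN : 0 < N) {E : Type*}
    [NormedAddCommGroup E] {G : (Fin d → ℝ) → E} (hG : IntegrableOn G (cube d))
    (I : Fin d → Fin N) : IntegrableOn G (cell d N I) :=
  (hG.congr_set_ae (cube_ae_eq_iUnion_cell d hN).symm).mono_set (Set.subset_iUnion _ I)

lemma norm_ee_sub_le_of_mem_cell {d N : ℕ} {I : Fin d → Fin N} {x : Fin d → ℝ}
    (hx : x ∈ cell d N I) (ξ : Fin d → ℤ) :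
    ‖ee (-(∑ m, (I m : ℂ) * (ξ m : ℂ)) / N) - ee (-(∑ m, (ξ m : ℂ) * (x m : ℂ)))‖
      ≤ 2 * π * (∑ m, |(ξ m : ℝ)|) / N := by
  have hcell (m : Fin d) : |x m - I m / N| ≤ 1 / N := by
    obtain ⟨h₀, h₁⟩ := hx m
    rw [add_div] at h₁
    rw [abs_of_nonneg (by linarith)]
    linarith
  have hphase : |-(∑ m, (I m : ℝ) * ξ m) / N - -(∑ m, (ξ m : ℝ) * x m)|
      ≤ (∑ m, |(ξ m : ℝ)|) / N := by
    calc _ = |∑ m, (ξ m : ℝ) * (x m - I m / N)| := by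
          rw [neg_div, sub_neg_eq_add, neg_add_eq_sub, Finset.sum_div, ← Finset.sum_sub_distrib]
          exact congrArg _ (Finset.sum_congr rfl fun m _ => by ring)
      _ ≤ ∑ m, |(ξ m : ℝ)| * (1 / N) := by
          refine (Finset.abs_sum_le_sum_abs _ _).trans (Finset.sum_le_sum fun m _ => ?_)
          rw [abs_mul]; gcongr; exact hcell m
      _ = (∑ m, |(ξ m : ℝ)|) / N := by rw [← Finset.sum_mul]; ring
  have := norm_ee_ofReal_sub_le (-(∑ m, (I m : ℝ) * ξ m) / N) (-(∑ m, (ξ m : ℝ) * x m))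
  push_cast at this
  rw [mul_div_assoc]
  exact this.trans (by gcongr)

lemma dftAvg_eq_sum_integral_cell {d N : ℕ} (hN : 0 < N) (F : (Fin d → ℝ) → ℂ)
    (ξ : Fin d → ℤ) :
    dftAvg d N F ξ
      = ∑ I, ∫ x in cell d N I, F x * ee (-(∑ m, (I m : ℂ) * (ξ m : ℂ)) / N) := by
  have hNd : (N : ℂ) ^ d ≠ 0 := pow_ne_zero _ (Nat.cast_ne_zero.2 hN.ne')
  simp only [dftAvg, cellAvg, Finset.mul_sum, integral_mul_const]
  exact Finset.sum_congr rfl fun I _ => by field_simp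

lemma norm_dftAvg_sub_fCoeff_le {d N : ℕ} (hN : 0 < N) {F : (Fin d → ℝ) → ℂ}
    (hF : IntegrableOn F (cube d)) (ξ : Fin d → ℤ) :
    ‖dftAvg d N F ξ - fCoeff d F ξ‖
      ≤ 2 * π * (∑ m, |(ξ m : ℝ)|) / N * ∫ x in cube d, ‖F x‖ := by
  have hFe : IntegrableOn (fun x => F x * ee (-(∑ m, (ξ m : ℂ) * (x m : ℂ)))) (cube d) :=
    hF.mul_bdd (continuous_ee_neg_sum ξ).aestronglyMeasurable
      (.of_forall fun x => (norm_ee_neg_sum ξ x).le)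
  rw [dftAvg_eq_sum_integral_cell hN, fCoeff, integral_cube_eq_sum_integral_cell hN hFe,
    integral_cube_eq_sum_integral_cell hN hF.norm, ← Finset.sum_sub_distrib, Finset.mul_sum]
  refine (norm_sum_le _ _).trans (Finset.sum_le_sum fun I _ => ?_)
  rw [← integral_sub ((hF.mono_cell hN I).mul_const _) (hFe.mono_cell hN I),
    ← integral_const_mul]
  refine norm_integral_le_of_norm_le ((hF.mono_cell hN I).norm.const_mul _)
    (ae_restrict_of_forall_mem (measurableSet_cell d N I) fun x hx => ?_)
  rw [← mul_sub, norm_mul, mul_comm]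
  exact mul_le_mul_of_nonneg_right (norm_ee_sub_le_of_mem_cell hx ξ) (norm_nonneg _)

instance isProbabilityMeasure_restrict_cube (d : ℕ) :
    IsProbabilityMeasure (volume.restrict (cube d)) :=
  ⟨by rw [Measure.restrict_apply_univ, cube_eq_pi, volume_pi_pi]; simp⟩

theorem exists_norm_le_of_forall_exists_norm_inner_le {𝕜 E ι : Type*} [RCLike 𝕜]
    [NormedAddCommGroup E] [InnerProductSpace 𝕜 E] [CompleteSpace E] {u : ι → E}
    (h : ∀ v, ∃ C, ∀ i, ‖inner 𝕜 (u i) v‖ ≤ C) : ∃ C, ∀ i, ‖u i‖ ≤ C := by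
  obtain ⟨C, hC⟩ := banach_steinhaus (g := fun i => innerSL 𝕜 (u i)) h
  exact ⟨C, fun i => (innerSL_apply_norm 𝕜 (u i)).symm.trans_le (hC i)⟩

lemma MeasureTheory.L2.inner_toLp_eq_conj_integral {α : Type*} [MeasurableSpace α] {μ : Measure α}
    {f : α → ℂ} (hf : MemLp f 2 μ) (v : Lp ℂ 2 μ) :
    inner ℂ (hf.toLp f) v = starRingEnd ℂ (∫ x, f x * starRingEnd ℂ (v x) ∂μ) := by
  rw [L2.inner_def, ← integral_conj]
  refine integral_congr_ae ?_
  filter_upwards [hf.coeFn_toLp] with x hx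
  simp [hx, mul_comm]

lemma integral_norm_le_eLpNorm_two {α E : Type*} [MeasurableSpace α] {μ : Measure α}
    [IsProbabilityMeasure μ] [NormedAddCommGroup E] {g : α → E} (hg : MemLp g 2 μ) :
    ∫ x, ‖g x‖ ∂μ ≤ (eLpNorm g 2 μ).toReal := by
  rw [integral_norm_eq_lintegral_enorm hg.aestronglyMeasurable, ← eLpNorm_one_eq_lintegral_enorm]
  exact ENNReal.toReal_mono hg.eLpNorm_ne_top
    (eLpNorm_le_eLpNorm_of_exponent_le one_le_two hg.aestronglyMeasurable)

namespace WeakL2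

variable {d : ℕ} {f : ℕ → (Fin d → ℝ) → ℂ} {flim : (Fin d → ℝ) → ℂ}

lemma exists_integral_norm_le (hfN : ∀ N, MemLp (f N) 2 (volume.restrict (cube d)))
    (hweak : WeakL2 d f flim) : ∃ C, ∀ N, ∫ x in cube d, ‖f N x‖ ≤ C := by
  obtain ⟨C, hC⟩ := exists_norm_le_of_forall_exists_norm_inner_le (𝕜 := ℂ)
    (u := fun N => (hfN N).toLp (f N)) fun v => by
      obtain ⟨C, hC⟩ := (hweak v (Lp.memLp v)).norm.bddAbove_range
      exact ⟨C, fun N => by simpa [L2.inner_toLp_eq_conj_integral] using hC ⟨N, rfl⟩⟩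
  exact ⟨C, fun N => (integral_norm_le_eLpNorm_two (hfN N)).trans
    ((Lp.norm_toLp _ _).symm.trans_le (hC N))⟩

lemma tendsto_fCoeff (hweak : WeakL2 d f flim) (ξ : Fin d → ℤ) :
    Tendsto (fun N => fCoeff d (f N) ξ) atTop (nhds (fCoeff d flim ξ)) := by
  have hv : MemLp (fun x => starRingEnd ℂ (ee (-(∑ m, (ξ m : ℂ) * (x m : ℂ))))) 2
      (volume.restrict (cube d)) :=
    .of_bound (continuous_star.comp (continuous_ee_neg_sum ξ)).aestronglyMeasurable 1
      (.of_forall fun x => by rw [RCLike.norm_conj, norm_ee_neg_sum])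
  simpa only [fCoeff, Complex.conj_conj] using hweak _ hv

end WeakL2

theorem dftAvg_tendsto_of_weakL2_general (d : ℕ) (f : ℕ → (Fin d → ℝ) → ℂ)
    (flim : (Fin d → ℝ) → ℂ)
    (hfN : ∀ N, MemLp (f N) 2 (volume.restrict (cube d)))
    (hweak : WeakL2 d f flim) (ξ' : Fin d → ℤ) :
    Tendsto (fun N => dftAvg d N (f N) ξ') atTop (nhds (fCoeff d flim ξ')) := by
  obtain ⟨C, hC⟩ := hweak.exists_integral_norm_le hfN
  have hdist : ∀ᶠ N in atTop, dist (fCoeff d (f N) ξ') (dftAvg d N (f N) ξ')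
      ≤ 2 * π * (∑ m, |(ξ' m : ℝ)|) * C / N := by
    filter_upwards [eventually_gt_atTop 0] with N hN
    rw [dist_comm, dist_eq_norm]
    calc _ ≤ 2 * π * (∑ m, |(ξ' m : ℝ)|) / N * ∫ x in cube d, ‖f N x‖ :=
          norm_dftAvg_sub_fCoeff_le hN ((hfN N).integrable one_le_two) ξ'
      _ ≤ 2 * π * (∑ m, |(ξ' m : ℝ)|) / N * C := by gcongr; exact hC N
      _ = 2 * π * (∑ m, |(ξ' m : ℝ)|) * C / N := by ring
  exact (hweak.tendsto_fCoeff ξ').congr_dist <| squeeze_zero' (.of_forall fun _ => dist_nonneg)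
    hdist (tendsto_const_div_atTop_nhds_zero_nat _)

/-- If `f_N ⇀ f_∞` weakly in `L²(Y;ℂ)`, then for each fixed frequency `ξ'` the
`ξ'`-th DFT coefficient of the cell averages of `f_N` converges to the `ξ'`-th
Fourier coefficient of `f_∞`. -/
theorem dftAvg_tendsto_of_weakL2 (d : ℕ) (f : ℕ → (Fin d → ℝ) → ℂ)
    (flim : (Fin d → ℝ) → ℂ)
    (hfN : ∀ N, MemLp (f N) 2 (volume.restrict (cube d)))
    (hflim : MemLp flim 2 (volume.restrict (cube d)))
    (hweak : WeakL2 d f flim) (ξ' : Fin d → ℤ) :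
    Tendsto (fun N => dftAvg d N (f N) ξ') atTop (nhds (fCoeff d flim ξ')) :=
  dftAvg_tendsto_of_weakL2_general d f flim hfN hweak ξ'

end
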